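/- arXiv:0912.2927 — 9 statements merged into one kernel-verified Lean document; each statement's English description precedes it below -/
import Mathlib

section
/- For every real matrix A ∈ ℝ^{m×n}, there exists a finite set X ⊆ ℝ^n such that the polyhedral cone {x ∈ ℝ^n : Ax ≤ 0} equals the conic hull of X, i.e. {x ∈ ℝ^n : Ax ≤ 0} = ccone(X). (Every polyhedral cone is finitely generated.) -/
open scoped NNReal Matrix
open Finset

/-- The conic hull of a finite set `X ⊆ ℝ^n`:
`ccone(X) = {∑_{x∈X} λ_x • x : λ_x ≥ 0 for all x ∈ X}`. -/
def ccone {n : ℕ} (X : Finset (Fin n → ℝ)) : Set (Fin n → ℝ) :=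
  {y | ∃ lam : (Fin n → ℝ) → ℝ, (∀ x ∈ X, 0 ≤ lam x) ∧ y = ∑ x ∈ X, lam x • x}

namespace PolyConeAux

variable {n : ℕ}

lemma nnsmul_eq (r : ℝ≥0) (v : Fin n → ℝ) : r • v = (r : ℝ) • v := by
  ext j; simp [NNReal.smul_def]

lemma smul_mem' (M : Submodule ℝ≥0 (Fin n → ℝ)) {r : ℝ} (hr : 0 ≤ r) {v : Fin n → ℝ}
    (hv : v ∈ M) : r • v ∈ M := by
  have h : (⟨r, hr⟩ : ℝ≥0) • v = r • v := by exact nnsmul_eq _ _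
  rw [← h]; exact M.smul_mem _ hv

lemma ccone_eq_span (X : Finset (Fin n → ℝ)) :
    ccone X = ↑(Submodule.span ℝ≥0 (X : Set (Fin n → ℝ))) := by
  ext y
  constructor
  · rintro ⟨lam, hlam, rfl⟩
    exact Submodule.sum_mem _ fun x hx =>
      smul_mem' _ (hlam x hx) (Submodule.subset_span hx)
  · intro hy
    obtain ⟨f, -, hf⟩ := Submodule.mem_span_finset.1 hy
    refine ⟨fun x => (f x : ℝ), fun x _ => (f x).2, ?_⟩
    rw [← hf]
    exact Finset.sum_congr rfl fun x _ => (nnsmul_eq _ _)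

lemma dot_sum {α : Type*} (c : Fin n → ℝ) (s : Finset α) (f : α → Fin n → ℝ) :
    c ⬝ᵥ (∑ a ∈ s, f a) = ∑ a ∈ s, c ⬝ᵥ f a := by
  simp only [dotProduct, Finset.sum_apply, Finset.mul_sum]
  exact Finset.sum_comm

/-- Fourier–Motzkin / double-description step: intersecting a finitely generated cone with
a halfspace gives a finitely generated cone. -/
lemma cut (c : Fin n → ℝ) (X : Finset (Fin n → ℝ)) :
    ∃ Y : Finset (Fin n → ℝ),
      ((Submodule.span ℝ≥0 (X : Set (Fin n → ℝ)) : Set (Fin n → ℝ)) ∩ {x | c ⬝ᵥ x ≤ 0})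
        = ↑(Submodule.span ℝ≥0 (Y : Set (Fin n → ℝ))) := by
  classical
  set N := X.filter (fun x => c ⬝ᵥ x ≤ 0) with hNdef
  set P := X.filter (fun x => ¬ c ⬝ᵥ x ≤ 0) with hPdef
  set W := (P ×ˢ N).image (fun pq => (c ⬝ᵥ pq.1) • pq.2 - (c ⬝ᵥ pq.2) • pq.1) with hWdef
  refine ⟨N ∪ W, ?_⟩
  ext z
  simp only [Set.mem_inter_iff, SetLike.mem_coe, Set.mem_setOf_eq]
  constructor
  · rintro ⟨hzX, hzc⟩
    obtain ⟨f, -, hf⟩ := Submodule.mem_span_finset.1 hzX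
    set lam : (Fin n → ℝ) → ℝ := fun x => (f x : ℝ) with hlamdef
    have hlam : ∀ x, 0 ≤ lam x := fun x => (f x).2
    have hf' : ∑ x ∈ X, lam x • x = z := by
      rw [← hf]; exact Finset.sum_congr rfl fun x _ => (nnsmul_eq _ _).symm
    have hsplit : ∑ q ∈ N, lam q • q + ∑ p ∈ P, lam p • p = z := by
      rw [← hf']; exact Finset.sum_filter_add_sum_filter_not X _ _
    set S := ∑ p ∈ P, lam p * (c ⬝ᵥ p) with hSdef
    set T := ∑ q ∈ N, lam q * (-(c ⬝ᵥ q)) with hTdef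
    have hS0 : 0 ≤ S := by
      refine Finset.sum_nonneg fun p hp => ?_
      have hp' := (Finset.mem_filter.1 hp).2
      exact mul_nonneg (hlam p) (le_of_lt (not_le.1 hp'))
    have hdot : c ⬝ᵥ z = S - T := by
      rw [← hsplit, dotProduct_add, dot_sum, dot_sum]
      have h1 : ∑ q ∈ N, c ⬝ᵥ (lam q • q) = -T := by
        rw [hTdef, ← Finset.sum_neg_distrib]
        refine Finset.sum_congr rfl fun q hq => ?_
        rw [dotProduct_smul]; ring_nf
      have h2 : ∑ p ∈ P, c ⬝ᵥ (lam p • p) = S := by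
        refine Finset.sum_congr rfl fun p hp => ?_
        rw [dotProduct_smul]; rfl
      rw [h1, h2]; ring
    have hST : S ≤ T := by have := hzc; rw [hdot] at this; linarith
    by_cases hS : S = 0
    · -- all coefficients on the positive side vanish
      have hp0 : ∀ p ∈ P, lam p • p = 0 := by
        intro p hp
        have hterm : ∀ p ∈ P, 0 ≤ lam p * (c ⬝ᵥ p) := fun p hp =>
          mul_nonneg (hlam p) (le_of_lt (not_le.1 (Finset.mem_filter.1 hp).2))
        have hz0 : lam p * (c ⬝ᵥ p) = 0 :=
          (Finset.sum_eq_zero_iff_of_nonneg hterm).1 hS p hp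
        have hcp : c ⬝ᵥ p ≠ 0 := ne_of_gt (not_le.1 (Finset.mem_filter.1 hp).2)
        have : lam p = 0 := by
          rcases mul_eq_zero.1 hz0 with h | h
          · exact h
          · exact absurd h hcp
        rw [this, zero_smul]
      have : z = ∑ q ∈ N, lam q • q := by
        rw [← hsplit, Finset.sum_eq_zero hp0, add_zero]
      rw [this]
      exact Submodule.sum_mem _ fun q hq =>
        smul_mem' _ (hlam q) (Submodule.subset_span (Finset.mem_union_left _ hq))
    · have hSpos : 0 < S := lt_of_le_of_ne hS0 (Ne.symm hS)
      have hTpos : 0 < T := lt_of_lt_of_le hSpos hST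
      have hTne : T ≠ 0 := ne_of_gt hTpos
      have hid : z = (∑ p ∈ P, ∑ q ∈ N, (lam p * lam q / T) •
            ((c ⬝ᵥ p) • q - (c ⬝ᵥ q) • p)) + ∑ q ∈ N, (lam q * (T - S) / T) • q := by
        funext j
        have hzj : z j = (∑ q ∈ N, lam q * q j) + ∑ p ∈ P, lam p * p j := by
          rw [← hsplit]
          simp [Finset.sum_apply]
        simp only [Pi.add_apply, Finset.sum_apply, Pi.smul_apply, Pi.sub_apply,
          smul_eq_mul, hzj]
        have key : ∑ p ∈ P, ∑ q ∈ N, (lam p * lam q / T) *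
              ((c ⬝ᵥ p) * q j - (c ⬝ᵥ q) * p j)
            = (S * (∑ q ∈ N, lam q * q j) + T * (∑ p ∈ P, lam p * p j)) / T := by
          rw [hSdef, hTdef, Finset.sum_mul_sum, Finset.sum_mul_sum,
            Finset.sum_comm (s := N) (t := P), ← Finset.sum_add_distrib,
            Finset.sum_div]
          refine Finset.sum_congr rfl fun p hp => ?_
          rw [← Finset.sum_add_distrib, Finset.sum_div]
          refine Finset.sum_congr rfl fun q hq => ?_
          field_simp
          ring
        rw [key]
        have key2 : ∑ q ∈ N, (lam q * (T - S) / T) * q j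
            = (∑ q ∈ N, lam q * q j) * ((T - S) / T) := by
          rw [Finset.sum_mul]
          refine Finset.sum_congr rfl fun q hq => ?_
          ring
        rw [key2]
        field_simp
        ring
      rw [hid]
      refine Submodule.add_mem _ ?_ ?_
      · refine Submodule.sum_mem _ fun p hp => Submodule.sum_mem _ fun q hq => ?_
        refine smul_mem' _ (div_nonneg (mul_nonneg (hlam p) (hlam q)) hTpos.le) ?_
        refine Submodule.subset_span (Finset.mem_union_right _ ?_)
        exact Finset.mem_image.2 ⟨(p, q), Finset.mem_product.2 ⟨hp, hq⟩, rfl⟩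
      · refine Submodule.sum_mem _ fun q hq => ?_
        exact smul_mem' _ (div_nonneg (mul_nonneg (hlam q) (sub_nonneg.2 hST)) hTpos.le)
          (Submodule.subset_span (Finset.mem_union_left _ hq))
  · intro hz
    have hgen : ∀ v ∈ ((N ∪ W : Finset (Fin n → ℝ)) : Set (Fin n → ℝ)),
        v ∈ Submodule.span ℝ≥0 (X : Set (Fin n → ℝ)) ∧ c ⬝ᵥ v ≤ 0 := by
      intro v hv
      rw [Finset.coe_union, Set.mem_union] at hv
      rcases hv with hv | hv
      · rw [Finset.mem_coe, hNdef, Finset.mem_filter] at hv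
        exact ⟨Submodule.subset_span hv.1, hv.2⟩
      · rw [Finset.mem_coe, hWdef, Finset.mem_image] at hv
        obtain ⟨⟨p, q⟩, hpq, rfl⟩ := hv
        obtain ⟨hp, hq⟩ := Finset.mem_product.1 hpq
        have hcp : 0 < c ⬝ᵥ p := not_le.1 (Finset.mem_filter.1 hp).2
        have hcq : c ⬝ᵥ q ≤ 0 := (Finset.mem_filter.1 hq).2
        constructor
        · have heq : (c ⬝ᵥ p) • q - (c ⬝ᵥ q) • p = (c ⬝ᵥ p) • q + (-(c ⬝ᵥ q)) • p := by
            rw [sub_eq_add_neg, neg_smul]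
          rw [heq]
          exact Submodule.add_mem _
            (smul_mem' _ hcp.le (Submodule.subset_span (Finset.mem_filter.1 hq).1))
            (smul_mem' _ (neg_nonneg.2 hcq) (Submodule.subset_span (Finset.mem_filter.1 hp).1))
        · have : c ⬝ᵥ ((c ⬝ᵥ p) • q - (c ⬝ᵥ q) • p) = 0 := by
            rw [dotProduct_sub, dotProduct_smul, dotProduct_smul,
              smul_eq_mul, smul_eq_mul]
            ring
          rw [this]
    constructor
    · exact Submodule.span_le.2 (fun v hv => (hgen v hv).1) hz
    · induction hz using Submodule.span_induction with
      | mem v hv => exact (hgen v hv).2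
      | zero => simp
      | add x y hx hy ihx ihy => rw [dotProduct_add]; linarith
      | smul r x hx ihx =>
          rw [nnsmul_eq, dotProduct_smul, smul_eq_mul]
          exact mul_nonpos_iff.2 (Or.inl ⟨r.2, ihx⟩)

/-- Cones given by finitely many halfspaces are finitely generated: induction on rows. -/
lemma rows {m : ℕ} (A : Matrix (Fin m) (Fin n) ℝ) (s : Finset (Fin m)) :
    ∃ X : Finset (Fin n → ℝ),
      {x : Fin n → ℝ | ∀ i ∈ s, A i ⬝ᵥ x ≤ 0}
        = ↑(Submodule.span ℝ≥0 (X : Set (Fin n → ℝ))) := by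
  classical
  induction s using Finset.induction_on with
  | empty =>
      refine ⟨(Finset.univ.image fun i : Fin n => (fun j => if i = j then (1:ℝ) else 0))
        ∪ (Finset.univ.image fun i : Fin n => -(fun j => if i = j then (1:ℝ) else 0)), ?_⟩
      ext x
      simp only [Finset.notMem_empty, false_implies, implies_true, Set.mem_setOf_eq,
        true_iff, SetLike.mem_coe]
      have hx : x = ∑ i : Fin n, x i • (fun j => if i = j then (1:ℝ) else 0) :=
        pi_eq_sum_univ x
      rw [hx]
      refine Submodule.sum_mem _ fun i _ => ?_
      by_cases h : 0 ≤ x i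
      · refine smul_mem' _ h (Submodule.subset_span ?_)
        exact Finset.mem_union_left _ (Finset.mem_image.2 ⟨i, Finset.mem_univ i, rfl⟩)
      · have : x i • (fun j => if i = j then (1:ℝ) else 0)
            = (-(x i)) • (-(fun j => if i = j then (1:ℝ) else 0)) := by
          rw [neg_smul_neg]
        rw [this]
        refine smul_mem' _ (by linarith [not_le.1 h]) (Submodule.subset_span ?_)
        exact Finset.mem_union_right _ (Finset.mem_image.2 ⟨i, Finset.mem_univ i, rfl⟩)
  | insert a s ha ih =>
      obtain ⟨X, hX⟩ := ih
      obtain ⟨Y, hY⟩ := cut (A a) X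
      refine ⟨Y, ?_⟩
      rw [← hY, ← hX]
      ext x
      simp only [Set.mem_setOf_eq, Set.mem_inter_iff, Finset.mem_insert]
      constructor
      · intro h
        exact ⟨fun i hi => h i (Or.inr hi), h a (Or.inl rfl)⟩
      · rintro ⟨h1, h2⟩ i (rfl | hi)
        · exact h2
        · exact h1 i hi

end PolyConeAux

/-- Every polyhedral cone `{x : Ax ≤ 0}` is the conic hull of a finite set. -/
theorem polyhedral_cone_finitely_generated {m n : ℕ} (A : Matrix (Fin m) (Fin n) ℝ) :
    ∃ X : Finset (Fin n → ℝ),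
      {x : Fin n → ℝ | A.mulVec x ≤ 0} = ccone X := by
  obtain ⟨X, hX⟩ := PolyConeAux.rows A Finset.univ
  refine ⟨X, ?_⟩
  rw [PolyConeAux.ccone_eq_span, ← hX]
  ext x
  simp [Pi.le_def, Matrix.mulVec, dotProduct]
end

section
/- Let B ∈ ℝ^{p×n} and C ∈ ℝ^{q×n} with p+q ≥ 1 and n ≥ 1, and let K = {x ∈ ℝ^n : Bx ≤ 0, Cx = 0}. If dim(ker(B) ∩ ker(C)) ≥ dim(ker(C)) − 1, then there exists a finite set X ⊆ ℝ^n with K = ccone(X). -/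
open scoped NNReal

lemma mem_ccone_iff {n : ℕ} (X : Finset (Fin n → ℝ)) (y : Fin n → ℝ) :
    y ∈ ccone X ↔ y ∈ Submodule.span ℝ≥0 (X : Set (Fin n → ℝ)) := by
  rw [show y ∈ Submodule.span ℝ≥0 (X : Set (Fin n → ℝ)) ↔ ∃ f : (Fin n → ℝ) → ℝ≥0, ∑ a ∈ X, f a • a = y from
    ⟨fun h => by obtain ⟨f, -, hf⟩ := Submodule.mem_span_finset.1 h; exact ⟨f, hf⟩,
     fun ⟨f, hf⟩ => hf ▸ Submodule.sum_mem _ fun x hx => Submodule.smul_mem _ _ (Submodule.subset_span hx)⟩]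
  constructor
  · rintro ⟨lam, hlam, rfl⟩
    refine ⟨fun x => Real.toNNReal (lam x), ?_⟩
    apply Finset.sum_congr rfl
    intro x hx
    rw [NNReal.smul_def, Real.coe_toNNReal _ (hlam x hx)]
  · rintro ⟨f, hf⟩
    refine ⟨fun x => (f x : ℝ), fun x _ => (f x).coe_nonneg, ?_⟩
    rw [← hf]
    apply Finset.sum_congr rfl
    intro x hx
    rw [NNReal.smul_def]

lemma exists_ccone_aux {n : ℕ} (W : Submodule ℝ (Fin n → ℝ)) (v : Fin n → ℝ) :
    ∃ X : Finset (Fin n → ℝ),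
      {x | ∃ w ∈ W, ∃ t : ℝ, 0 ≤ t ∧ x = w + t • v} = ccone X := by
  classical
  obtain ⟨s, hs⟩ := IsNoetherian.noetherian W
  refine ⟨(s ∪ s.image (fun y => -y)) ∪ {v}, ?_⟩
  ext x
  rw [Set.mem_setOf_eq, mem_ccone_iff]
  set T := Submodule.span ℝ≥0 (((s ∪ s.image (fun y => -y)) ∪ {v} : Finset (Fin n → ℝ)) :
    Set (Fin n → ℝ)) with hT
  have hsmul : ∀ (c : ℝ), 0 ≤ c → ∀ a ∈ T, c • a ∈ T := by
    intro c hc a ha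
    have : c • a = c.toNNReal • a := by rw [NNReal.smul_def, Real.coe_toNNReal _ hc]
    rw [this]; exact T.smul_mem _ ha
  have hv : v ∈ T := Submodule.subset_span (by simp)
  constructor
  · rintro ⟨w, hw, t, ht, rfl⟩
    have hw' : w ∈ T := by
      have hwspan : w ∈ Submodule.span ℝ (s : Set (Fin n → ℝ)) := hs ▸ hw
      refine (Submodule.span_induction (p := fun x _ => x ∈ T ∧ -x ∈ T) ?_ ?_ ?_ ?_ hwspan).1
      · intro y hy
        refine ⟨Submodule.subset_span ?_, Submodule.subset_span ?_⟩ <;> simp_all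
      · simp
      · rintro a b _ _ ⟨ha, ha'⟩ ⟨hb, hb'⟩
        exact ⟨T.add_mem ha hb, by rw [neg_add]; exact T.add_mem ha' hb'⟩
      · rintro c a _ ⟨ha, ha'⟩
        rcases le_or_gt 0 c with hc | hc
        · exact ⟨hsmul c hc a ha, by rw [← smul_neg]; exact hsmul c hc _ ha'⟩
        · constructor
          · have : c • a = (-c) • (-a) := by simp
            rw [this]; exact hsmul _ (by linarith) _ ha'
          · have : -(c • a) = (-c) • a := by simp
            rw [this]; exact hsmul _ (by linarith) _ ha
    exact T.add_mem hw' (hsmul t ht v hv)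
  · intro hx
    refine Submodule.span_induction (p := fun x _ => ∃ w ∈ W, ∃ t : ℝ, 0 ≤ t ∧ x = w + t • v)
      ?_ ?_ ?_ ?_ hx
    · intro y hy
      simp only [Finset.coe_union, Finset.coe_image, Finset.coe_singleton, Set.mem_union,
        Set.mem_image, Set.mem_singleton_iff, Finset.mem_coe] at hy
      rcases hy with (hy | ⟨z, hz, rfl⟩) | rfl
      · exact ⟨y, hs ▸ Submodule.subset_span hy, 0, le_refl _, by simp⟩
      · exact ⟨-z, W.neg_mem (hs ▸ Submodule.subset_span hz), 0, le_refl _, by simp⟩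
      · exact ⟨0, W.zero_mem, 1, zero_le_one, by simp⟩
    · exact ⟨0, W.zero_mem, 0, le_refl _, by simp⟩
    · rintro a b _ _ ⟨w1, hw1, t1, ht1, rfl⟩ ⟨w2, hw2, t2, ht2, rfl⟩
      exact ⟨w1 + w2, W.add_mem hw1 hw2, t1 + t2, by linarith, by rw [add_smul]; abel⟩
    · rintro c a _ ⟨w, hw, t, ht, rfl⟩
      refine ⟨(c : ℝ) • w, W.smul_mem _ hw, (c : ℝ) * t, mul_nonneg c.coe_nonneg ht, ?_⟩
      rw [NNReal.smul_def, smul_add, smul_smul]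

/-- If `dim(ker B ∩ ker C) ≥ dim(ker C) − 1`, then `K = {x : Bx ≤ 0, Cx = 0}` is the conic
hull of a finite set. -/
theorem cone_finitely_generated_of_dim_ker {p q n : ℕ} (hpq : 1 ≤ p + q) (hn : 1 ≤ n)
    (B : Matrix (Fin p) (Fin n) ℝ) (C : Matrix (Fin q) (Fin n) ℝ)
    (K : Set (Fin n → ℝ))
    (hK : K = {x : Fin n → ℝ | B.mulVec x ≤ 0 ∧ C.mulVec x = 0})
    (hdim : Module.finrank ℝ ↥(LinearMap.ker B.mulVecLin ⊓ LinearMap.ker C.mulVecLin) ≥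
      Module.finrank ℝ ↥(LinearMap.ker C.mulVecLin) - 1) :
    ∃ X : Finset (Fin n → ℝ), K = ccone X := by
  suffices h : ∃ (W' : Submodule ℝ (Fin n → ℝ)) (v : Fin n → ℝ),
      K = {x | ∃ w ∈ W', ∃ t : ℝ, 0 ≤ t ∧ x = w + t • v} by
    obtain ⟨W', v, h⟩ := h
    obtain ⟨X, hX⟩ := exists_ccone_aux W' v
    exact ⟨X, h.trans hX⟩
  classical
  set V := LinearMap.ker C.mulVecLin with hV
  set W := LinearMap.ker B.mulVecLin ⊓ V with hW
  have hmemV : ∀ x, x ∈ V ↔ C.mulVec x = 0 := by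
    intro x; rw [hV, LinearMap.mem_ker, Matrix.mulVecLin_apply]
  have hmemW : ∀ x, x ∈ W ↔ B.mulVec x = 0 ∧ C.mulVec x = 0 := by
    intro x
    rw [hW, Submodule.mem_inf, LinearMap.mem_ker, Matrix.mulVecLin_apply, hmemV]
  have hlin : ∀ (y z : Fin n → ℝ) (c : ℝ) (M : Matrix (Fin p) (Fin n) ℝ),
      M.mulVec (y + c • z) = M.mulVec y + c • M.mulVec z := by
    intro y z c M
    simp [Matrix.mulVec_add, Matrix.mulVec_smul]
  have hlinC : ∀ (y z : Fin n → ℝ) (c : ℝ),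
      C.mulVec (y + c • z) = C.mulVec y + c • C.mulVec z := by
    intro y z c
    simp [Matrix.mulVec_add, Matrix.mulVec_smul]
  by_cases hWV : ∀ x ∈ V, B.mulVec x = 0
  · refine ⟨V, 0, ?_⟩
    rw [hK]; ext x
    simp only [Set.mem_setOf_eq]
    constructor
    · rintro ⟨hB, hC⟩
      exact ⟨x, (hmemV x).2 hC, 0, le_refl _, by simp⟩
    · rintro ⟨w, hw, t, ht, rfl⟩
      simp only [smul_zero, add_zero]
      exact ⟨le_of_eq (hWV w hw), (hmemV w).1 hw⟩
  · push_neg at hWV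
    obtain ⟨v0, hv0V, hv0B⟩ := hWV
    have hv0ne : v0 ≠ 0 := by
      intro h; apply hv0B; rw [h]; simp [Matrix.mulVec_zero]
    -- V = W ⊔ span {v0}
    have hle : W ⊔ Submodule.span ℝ {v0} ≤ V := by
      refine sup_le inf_le_right ?_
      rw [Submodule.span_le, Set.singleton_subset_iff]
      exact hv0V
    have hinf : W ⊓ Submodule.span ℝ {v0} = ⊥ := by
      rw [eq_bot_iff]
      rintro x ⟨hxW, hxS⟩
      obtain ⟨c, rfl⟩ := Submodule.mem_span_singleton.1 hxS
      rcases eq_or_ne c 0 with rfl | hc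
      · simp
      · exfalso
        apply hv0B
        have := ((hmemW _).1 hxW).1
        have h2 : B.mulVec (c • v0) = c • B.mulVec v0 := by
          simp [Matrix.mulVec_smul]
        rw [h2] at this
        have := congrArg (fun y => c⁻¹ • y) this
        simpa [smul_smul, inv_mul_cancel₀ hc] using this
    have hrank : Module.finrank ℝ ↥(W ⊔ Submodule.span ℝ {v0}) = Module.finrank ℝ ↥W + 1 := by
      have := Submodule.finrank_sup_add_finrank_inf_eq W (Submodule.span ℝ {v0})
      rw [hinf, finrank_bot, finrank_span_singleton hv0ne] at this
      omega
    have hVeq : W ⊔ Submodule.span ℝ {v0} = V := by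
      apply Submodule.eq_of_le_of_finrank_le hle
      rw [hrank]
      omega
    have hdec : ∀ x ∈ V, ∃ w ∈ W, ∃ c : ℝ, x = w + c • v0 := by
      intro x hx
      rw [← hVeq] at hx
      obtain ⟨w, hw, y, hy, rfl⟩ := Submodule.mem_sup.1 hx
      obtain ⟨c, rfl⟩ := Submodule.mem_span_singleton.1 hy
      exact ⟨w, hw, c, rfl⟩
    -- helper for the definite-sign case
    have key : ∀ v : Fin n → ℝ, C.mulVec v = 0 → B.mulVec v ≤ 0 → B.mulVec v ≠ 0 →
        (∀ x ∈ V, ∃ w ∈ W, ∃ c : ℝ, x = w + c • v) →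
        K = {x | ∃ w ∈ W, ∃ t : ℝ, 0 ≤ t ∧ x = w + t • v} := by
      intro v hvC hvB hvBne hdec'
      rw [hK]; ext x
      simp only [Set.mem_setOf_eq]
      constructor
      · rintro ⟨hB, hC⟩
        obtain ⟨w, hw, c, rfl⟩ := hdec' x ((hmemV x).2 hC)
        refine ⟨w, hw, c, ?_, rfl⟩
        by_contra hc
        push_neg at hc
        obtain ⟨i, hi⟩ := Function.ne_iff.1 hvBne
        have hBi : B.mulVec v i < 0 := lt_of_le_of_ne (hvB i) hi
        have := hB i
        rw [hlin w v c B, ((hmemW w).1 hw).1] at this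
        simp only [Pi.add_apply, Pi.zero_apply, Pi.smul_apply, smul_eq_mul, zero_add] at this
        nlinarith
      · rintro ⟨w, hw, t, ht, rfl⟩
        constructor
        · rw [hlin w v t B, ((hmemW w).1 hw).1]
          intro i
          simp only [Pi.add_apply, Pi.zero_apply, Pi.smul_apply, smul_eq_mul, zero_add]
          exact mul_nonpos_of_nonneg_of_nonpos ht (hvB i)
        · rw [hlinC w v t, ((hmemW w).1 hw).2, hvC]
          simp
    by_cases h1 : B.mulVec v0 ≤ 0
    · exact ⟨W, v0, key v0 ((hmemV v0).1 hv0V) h1 hv0B hdec⟩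
    · by_cases h2 : B.mulVec (-v0) ≤ 0
      · refine ⟨W, -v0, key (-v0) ?_ h2 ?_ ?_⟩
        · have : C.mulVec (-v0) = -C.mulVec v0 := by
            simp [Matrix.mulVec_neg]
          rw [this, (hmemV v0).1 hv0V]; simp
        · intro h
          apply hv0B
          have hneg : B.mulVec (-v0) = -B.mulVec v0 := by
            simp [Matrix.mulVec_neg]
          rw [hneg] at h
          simpa [neg_eq_zero] using h
        · intro x hx
          obtain ⟨w, hw, c, rfl⟩ := hdec x hx
          exact ⟨w, hw, -c, by simp⟩
      · -- mixed signs: K = W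
        refine ⟨W, 0, ?_⟩
        rw [hK]; ext x
        simp only [Set.mem_setOf_eq]
        constructor
        · rintro ⟨hB, hC⟩
          obtain ⟨w, hw, c, rfl⟩ := hdec x ((hmemV x).2 hC)
          have hcB : ∀ i, c * B.mulVec v0 i ≤ 0 := by
            intro i
            have := hB i
            rw [hlin w v0 c B, ((hmemW w).1 hw).1] at this
            simpa using this
          have hc : c = 0 := by
            rcases lt_trichotomy c 0 with h | h | h
            · exfalso
              apply h2
              intro i
              have := hcB i
              have hneg : B.mulVec (-v0) = -B.mulVec v0 := by
                simp [Matrix.mulVec_neg]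
              rw [hneg]
              simp only [Pi.neg_apply, Pi.zero_apply, neg_nonpos]
              by_contra hcon
              push_neg at hcon
              exact absurd this (not_le.2 (mul_pos_of_neg_of_neg h hcon))
            · exact h
            · exfalso
              apply h1
              intro i
              have := hcB i
              simp only [Pi.zero_apply]
              by_contra hcon
              push_neg at hcon
              exact absurd this (not_le.2 (mul_pos h hcon))
          subst hc
          exact ⟨w, hw, 0, le_refl _, by simp⟩
        · rintro ⟨w, hw, t, ht, rfl⟩
          simp only [smul_zero, add_zero]
          exact ⟨le_of_eq ((hmemW w).1 hw).1, ((hmemW w).1 hw).2⟩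
end

section
/- Let B ∈ ℝ^{p×n} and C ∈ ℝ^{q×n} with p+q ≥ 1 and n ≥ 1, and let K = {x ∈ ℝ^n : Bx ≤ 0, Cx = 0}. If dim(ker(B) ∩ ker(C)) < dim(ker(C)) − 1, then there exists a vector z ∈ ker(C) with z ≠ 0 such that z ∉ K and −z ∉ K. -/
/-- In a subspace where every vector is componentwise `≤ 0` or `≥ 0`, a nonnegative vector
vanishing at an index where some nonnegative member is positive must be zero. -/
lemma aux_nonneg_zero {p : ℕ} (S : Submodule ℝ (Fin p → ℝ))
    (h : ∀ s ∈ S, s ≤ 0 ∨ 0 ≤ s) {s d : Fin p → ℝ} (hs : s ∈ S) (hd : d ∈ S)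
    (hs0 : 0 ≤ s) {i : Fin p} (hsi : 0 < s i) (hd0 : 0 ≤ d) (hdi : d i = 0) : d = 0 := by
  funext j
  simp only [Pi.zero_apply]
  by_contra hj
  have hd0j : (0:ℝ) ≤ d j := by simpa using hd0 j
  have hs0j : (0:ℝ) ≤ s j := by simpa using hs0 j
  have hdj : 0 < d j := lt_of_le_of_ne hd0j (Ne.symm hj)
  have hsj1 : (0:ℝ) < s j + 1 := by linarith
  set ε : ℝ := d j / (s j + 1) with hε
  have hε0 : 0 < ε := div_pos hdj hsj1
  have hkey : ε * (s j + 1) = d j := div_mul_cancel₀ _ (ne_of_gt hsj1)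
  have he : d - ε • s ∈ S := S.sub_mem hd (S.smul_mem _ hs)
  have hej : 0 < (d - ε • s) j := by
    have : (d - ε • s) j = d j - ε * s j := by simp [smul_eq_mul]
    rw [this]; nlinarith
  have hei : (d - ε • s) i < 0 := by
    have : (d - ε • s) i = d i - ε * s i := by simp [smul_eq_mul]
    rw [this, hdi]; nlinarith
  rcases h _ he with hle | hge
  · exact absurd (hle j) (not_le.mpr hej)
  · exact absurd (hge i) (not_le.mpr hei)

/-- A subspace of `ℝ^p` in which every vector is componentwise `≤ 0` or `≥ 0` has
dimension at most 1. -/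
lemma aux_finrank {p : ℕ} (S : Submodule ℝ (Fin p → ℝ))
    (h : ∀ s ∈ S, s ≤ 0 ∨ 0 ≤ s) : Module.finrank ℝ S ≤ 1 := by
  by_cases hbot : S = ⊥
  · rw [hbot]; simp
  · obtain ⟨s₀, hs₀, hs₀ne⟩ := Submodule.exists_mem_ne_zero_of_ne_bot hbot
    obtain ⟨s, hs, hs0, hsne⟩ : ∃ s, s ∈ S ∧ 0 ≤ s ∧ s ≠ 0 := by
      rcases h s₀ hs₀ with h1 | h2
      · exact ⟨-s₀, S.neg_mem hs₀, neg_nonneg.mpr h1, neg_ne_zero.mpr hs₀ne⟩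
      · exact ⟨s₀, hs₀, h2, hs₀ne⟩
    obtain ⟨i, hi⟩ : ∃ i, s i ≠ 0 := by
      by_contra hall
      push_neg at hall
      exact hsne (funext hall)
    have hsi : 0 < s i := lt_of_le_of_ne (hs0 i) (Ne.symm hi)
    have hspan : S ≤ Submodule.span ℝ {s} := by
      intro t ht
      set c : ℝ := t i / s i with hc
      have hdmem : t - c • s ∈ S := S.sub_mem ht (S.smul_mem _ hs)
      have hdi : (t - c • s) i = 0 := by
        have : (t - c • s) i = t i - c * s i := by simp [smul_eq_mul]
        rw [this, hc, div_mul_cancel₀ _ (ne_of_gt hsi)]; ring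
      have hd0 : t - c • s = 0 := by
        rcases h _ hdmem with hle | hge
        · have := aux_nonneg_zero S h hs (S.neg_mem hdmem) hs0 hsi
            (neg_nonneg.mpr hle) (by simp [hdi])
          have := neg_eq_zero.mp this
          exact this
        · exact aux_nonneg_zero S h hs hdmem hs0 hsi hge hdi
      have : t = c • s := by
        have := sub_eq_zero.mp hd0
        exact this
      rw [this]
      exact Submodule.smul_mem _ _ (Submodule.mem_span_singleton_self s)
    calc Module.finrank ℝ S ≤ Module.finrank ℝ (Submodule.span ℝ {s}) :=
          Submodule.finrank_mono hspan
      _ = 1 := finrank_span_singleton hsne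

/-- If `dim(ker B ∩ ker C) < dim(ker C) − 1`, then there is some nonzero `z ∈ ker C` with
`z ∉ K` and `−z ∉ K`, where `K = {x : Bx ≤ 0, Cx = 0}`. -/
theorem exists_nonzero_in_ker_not_in_cone {p q n : ℕ} (hpq : 1 ≤ p + q) (hn : 1 ≤ n)
    (B : Matrix (Fin p) (Fin n) ℝ) (C : Matrix (Fin q) (Fin n) ℝ)
    (K : Set (Fin n → ℝ))
    (hK : K = {x : Fin n → ℝ | B.mulVec x ≤ 0 ∧ C.mulVec x = 0})
    (hdim : Module.finrank ℝ ↥(LinearMap.ker B.mulVecLin ⊓ LinearMap.ker C.mulVecLin) <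
      Module.finrank ℝ ↥(LinearMap.ker C.mulVecLin) - 1) :
    ∃ z : Fin n → ℝ, C.mulVec z = 0 ∧ z ≠ 0 ∧ z ∉ K ∧ -z ∉ K := by
  by_contra hcon
  push_neg at hcon
  set V := LinearMap.ker C.mulVecLin with hV
  set S := Submodule.map B.mulVecLin V with hSdef
  have hS : ∀ s ∈ S, s ≤ 0 ∨ 0 ≤ s := by
    rintro s ⟨z, hz, rfl⟩
    have hzC : C.mulVec z = 0 := by
      simpa [Matrix.mulVecLin_apply] using (LinearMap.mem_ker.mp hz)
    by_cases hz0 : z = 0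
    · subst hz0; left; simp
    by_cases hzK : z ∈ K
    · left
      rw [hK] at hzK
      simpa [Matrix.mulVecLin_apply] using hzK.1
    · right
      have hneg := hcon z hzC hz0 hzK
      rw [hK] at hneg
      have h1 : B.mulVec (-z) ≤ 0 := hneg.1
      rw [Matrix.mulVec_neg] at h1
      simpa [Matrix.mulVecLin_apply] using neg_nonpos.mp h1
  have hrank : Module.finrank ℝ S ≤ 1 := aux_finrank S hS
  -- rank-nullity for B restricted to V
  set f : V →ₗ[ℝ] (Fin p → ℝ) := B.mulVecLin.comp V.subtype with hf
  have hrange : LinearMap.range f = S := by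
    rw [hf, LinearMap.range_comp, Submodule.range_subtype]
  have hker : LinearMap.ker f = Submodule.comap V.subtype
      (LinearMap.ker B.mulVecLin ⊓ V) := by
    rw [hf, LinearMap.ker_comp]
    ext x
    simp [Submodule.mem_comap, x.2]
  have hkerrank : Module.finrank ℝ (LinearMap.ker f) =
      Module.finrank ℝ ↥(LinearMap.ker B.mulVecLin ⊓ V) := by
    rw [hker]
    exact LinearEquiv.finrank_eq (Submodule.comapSubtypeEquivOfLe inf_le_right)
  have hrn := LinearMap.finrank_range_add_finrank_ker f
  rw [hrange, hkerrank] at hrn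
  have hVrank : Module.finrank ℝ V =
      Module.finrank ℝ S + Module.finrank ℝ ↥(LinearMap.ker B.mulVecLin ⊓ V) := hrn.symm
  omega
end

section
/- Let B ∈ ℝ^{p×n} and C ∈ ℝ^{q×n}, let K = {x ∈ ℝ^n : Bx ≤ 0, Cx = 0}, and let U = ker(B) ∩ ker(C). Suppose a ∈ K with a ∉ U, and suppose U = {x ∈ ker(C) : ⟨a, x⟩ = 0} (where ⟨·,·⟩ is the standard inner product on ℝ^n). Then ⟨a, y⟩ > 0 for every y ∈ K with y ∉ U. -/
open Matrix

/-- If `a ∈ K \ U` where `K = {x : Bx ≤ 0, Cx = 0}`, `U = ker B ∩ ker C`, and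
`U = {x ∈ ker C : ⟨a, x⟩ = 0}`, then `⟨a, y⟩ > 0` for every `y ∈ K \ U`. -/
theorem dotProduct_pos_of_mem_cone_not_mem {p q n : ℕ}
    (B : Matrix (Fin p) (Fin n) ℝ) (C : Matrix (Fin q) (Fin n) ℝ)
    (K U : Set (Fin n → ℝ))
    (hK : K = {x : Fin n → ℝ | B.mulVec x ≤ 0 ∧ C.mulVec x = 0})
    (hU : U = {x : Fin n → ℝ | B.mulVec x = 0 ∧ C.mulVec x = 0})
    (a : Fin n → ℝ) (haK : a ∈ K) (haU : a ∉ U)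
    (hUa : U = {x : Fin n → ℝ | C.mulVec x = 0 ∧ a ⬝ᵥ x = 0}) :
    ∀ y ∈ K, y ∉ U → 0 < a ⬝ᵥ y := by
  intro y hyK hyU
  rw [hK] at haK hyK
  obtain ⟨hBa, hCa⟩ := haK
  obtain ⟨hBy, hCy⟩ := hyK
  have haU' : ¬ (C.mulVec a = 0 ∧ a ⬝ᵥ a = 0) := by rw [hUa] at haU; exact haU
  have hyU' : ¬ (C.mulVec y = 0 ∧ a ⬝ᵥ y = 0) := by rw [hUa] at hyU; exact hyU
  have haa : a ⬝ᵥ a ≠ 0 := fun h => haU' ⟨hCa, h⟩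
  have hay : a ⬝ᵥ y ≠ 0 := fun h => hyU' ⟨hCy, h⟩
  have haapos : 0 < a ⬝ᵥ a := lt_of_le_of_ne (by
    classical
    simpa [dotProduct] using Finset.sum_nonneg fun i _ => mul_self_nonneg (a i)) (Ne.symm haa)
  by_contra hneg
  have hayneg : a ⬝ᵥ y < 0 := lt_of_le_of_ne (not_lt.mp hneg) hay
  set s := a ⬝ᵥ a with hs
  set t := a ⬝ᵥ y with ht
  set z := s • y - t • a with hz
  have hCz : C.mulVec z = 0 := by
    rw [hz, mulVec_sub, mulVec_smul, mulVec_smul, hCa, hCy, smul_zero, smul_zero, sub_zero]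
  have haz : a ⬝ᵥ z = 0 := by
    rw [hz, dotProduct_sub, dotProduct_smul, dotProduct_smul, smul_eq_mul, smul_eq_mul,
      ← hs, ← ht]
    ring
  have hzU : z ∈ U := by rw [hUa]; exact ⟨hCz, haz⟩
  rw [hU] at hzU
  have hBz : B.mulVec z = 0 := hzU.1
  have hBy0 : B.mulVec y = 0 := by
    have hexp : s • B.mulVec y = t • B.mulVec a := by
      have : B.mulVec z = s • B.mulVec y - t • B.mulVec a := by
        rw [hz, mulVec_sub, mulVec_smul, mulVec_smul]
      rw [this] at hBz
      exact sub_eq_zero.mp hBz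
    funext i
    simp only [Pi.zero_apply]
    have h1 : s * B.mulVec y i = t * B.mulVec a i := by
      have := congrFun hexp i
      simpa [smul_eq_mul] using this
    have hBai : B.mulVec a i ≤ 0 := hBa i
    have hByi : B.mulVec y i ≤ 0 := hBy i
    nlinarith
  exact hyU (by rw [hU]; exact ⟨hBy0, hCy⟩)
end

section
/- Let B ∈ ℝ^{p×n} and C ∈ ℝ^{q×n}, let K = {x ∈ ℝ^n : Bx ≤ 0, Cx = 0}, and let U = ker(B) ∩ ker(C). Suppose a ∈ K with a ∉ U, and suppose U = {x ∈ ker(C) : ⟨a, x⟩ = 0} (where ⟨·,·⟩ is the standard inner product on ℝ^n). Then K = {u + λa : u ∈ U, λ ∈ ℝ, λ ≥ 0}. -/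
open Matrix

/-- If `a ∈ K \ U` where `K = {x : Bx ≤ 0, Cx = 0}`, `U = ker B ∩ ker C`, and
`U = {x ∈ ker C : ⟨a, x⟩ = 0}`, then `K = {u + λ • a : u ∈ U, λ ≥ 0}`. -/
theorem cone_eq_sub_add_ray {p q n : ℕ}
    (B : Matrix (Fin p) (Fin n) ℝ) (C : Matrix (Fin q) (Fin n) ℝ)
    (K U : Set (Fin n → ℝ))
    (hK : K = {x : Fin n → ℝ | B.mulVec x ≤ 0 ∧ C.mulVec x = 0})
    (hU : U = {x : Fin n → ℝ | B.mulVec x = 0 ∧ C.mulVec x = 0})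
    (a : Fin n → ℝ) (haK : a ∈ K) (haU : a ∉ U)
    (hUa : U = {x : Fin n → ℝ | C.mulVec x = 0 ∧ a ⬝ᵥ x = 0}) :
    K = {y : Fin n → ℝ | ∃ u ∈ U, ∃ l : ℝ, 0 ≤ l ∧ y = u + l • a} := by
  subst hK
  obtain ⟨hBa, hCa⟩ := haK
  have hBa0 : B.mulVec a ≠ 0 := fun h => haU (hU ▸ ⟨h, hCa⟩)
  have ha0 : a ≠ 0 := by
    rintro rfl
    exact hBa0 (by simp)
  have haa : 0 < a ⬝ᵥ a := by
    have h1 : 0 ≤ a ⬝ᵥ a := Finset.sum_nonneg fun i _ => mul_self_nonneg _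
    rcases h1.lt_or_eq with h | h
    · exact h
    · exact absurd ((dotProduct_self_eq_zero).mp h.symm) ha0
  ext x
  constructor
  · rintro ⟨hBx, hCx⟩
    set l : ℝ := (a ⬝ᵥ x) / (a ⬝ᵥ a) with hl
    set u : Fin n → ℝ := x - l • a with hu
    have hCu : C.mulVec u = 0 := by
      rw [hu, Matrix.mulVec_sub, Matrix.mulVec_smul, hCx, hCa]
      simp
    have hau : a ⬝ᵥ u = 0 := by
      rw [hu, dotProduct_sub, dotProduct_smul, hl]
      rw [smul_eq_mul, div_mul_cancel₀ _ haa.ne', sub_self]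
    have huU : u ∈ U := hUa ▸ ⟨hCu, hau⟩
    have hBu : B.mulVec u = 0 := by rw [hU] at huU; exact huU.1
    have hBx' : B.mulVec x = l • B.mulVec a := by
      have : B.mulVec u = B.mulVec x - l • B.mulVec a := by
        rw [hu, Matrix.mulVec_sub, Matrix.mulVec_smul]
      rw [this] at hBu
      exact (sub_eq_zero.mp hBu)
    obtain ⟨i, hi⟩ : ∃ i, B.mulVec a i ≠ 0 := by
      by_contra h
      push_neg at h
      exact hBa0 (funext h)
    have hineg : B.mulVec a i < 0 := lt_of_le_of_ne (hBa i) hi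
    have hxi : B.mulVec x i ≤ 0 := hBx i
    rw [hBx'] at hxi
    simp only [Pi.smul_apply, smul_eq_mul] at hxi
    have hl0 : 0 ≤ l := by nlinarith
    exact ⟨u, huU, l, hl0, by rw [hu]; abel⟩
  · rintro ⟨u, huU, l, hl0, rfl⟩
    rw [hU] at huU
    obtain ⟨hBu, hCu⟩ := huU
    constructor
    · rw [Matrix.mulVec_add, Matrix.mulVec_smul, hBu]
      intro i
      simpa using mul_nonpos_of_nonneg_of_nonpos hl0 (hBa i)
    · rw [Matrix.mulVec_add, Matrix.mulVec_smul, hCu, hCa]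
      simp
end

section
/- Let B ∈ ℝ^{p×n} and C ∈ ℝ^{q×n}, let K = {x ∈ ℝ^n : Bx ≤ 0, Cx = 0}, let w = Bᵀ𝟙 ∈ ℝ^n be the sum of all rows of B, and let L⊥ = {x ∈ ℝ^n : ⟨w, x⟩ = 0}. If dim(ker(B) ∩ ker(C)) < dim(ker(C)) − 1, then the linear subspace L⊥ ∩ ker(C) is not contained in K; moreover, any z ∈ (L⊥ ∩ ker(C)) \ K satisfies z ≠ 0, z ∉ K and −z ∉ K. -/
open Matrix

lemma aux_sum_zero {p : ℕ} (v : Fin p → ℝ) (hle : v ≤ 0) (hsum : ∑ i, v i = 0) : v = 0 := by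
  funext i
  have := (Finset.sum_eq_zero_iff_of_nonpos (fun i _ => hle i)).mp hsum i (Finset.mem_univ i)
  simpa using this

/-- Let `K = {x : Bx ≤ 0, Cx = 0}`, `w = Bᵀ𝟙` the sum of all rows of `B`, and
`L⊥ = {x : ⟨w, x⟩ = 0}`. If `dim(ker B ∩ ker C) < dim(ker C) − 1`, then `L⊥ ∩ ker C` is
not contained in `K`, and any `z ∈ (L⊥ ∩ ker C) \ K` satisfies `z ≠ 0`, `z ∉ K`, `−z ∉ K`. -/
theorem not_subset_and_witness {p q n : ℕ}
    (B : Matrix (Fin p) (Fin n) ℝ) (C : Matrix (Fin q) (Fin n) ℝ)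
    (K : Set (Fin n → ℝ))
    (hK : K = {x : Fin n → ℝ | B.mulVec x ≤ 0 ∧ C.mulVec x = 0})
    (w : Fin n → ℝ) (hw : w = Bᵀ.mulVec 1)
    (Lperp : Set (Fin n → ℝ)) (hL : Lperp = {x : Fin n → ℝ | w ⬝ᵥ x = 0})
    (hdim : Module.finrank ℝ ↥(LinearMap.ker B.mulVecLin ⊓ LinearMap.ker C.mulVecLin) <
      Module.finrank ℝ ↥(LinearMap.ker C.mulVecLin) - 1) :
    ¬ (Lperp ∩ {x : Fin n → ℝ | C.mulVec x = 0} ⊆ K) ∧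
      ∀ z ∈ (Lperp ∩ {x : Fin n → ℝ | C.mulVec x = 0}) \ K,
        z ≠ 0 ∧ z ∉ K ∧ -z ∉ K := by
  -- key: w ⬝ᵥ x = ∑ i, (B *ᵥ x) i
  have hwx : ∀ x : Fin n → ℝ, w ⬝ᵥ x = ∑ i, B.mulVec x i := by
    intro x
    rw [hw, mulVec_transpose, ← dotProduct_mulVec]
    simp [dotProduct]
  -- if x ∈ Lperp and Bx ≤ 0 then Bx = 0
  have hzero : ∀ x : Fin n → ℝ, w ⬝ᵥ x = 0 → B.mulVec x ≤ 0 → B.mulVec x = 0 := by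
    intro x hx hle
    exact aux_sum_zero _ hle (by rw [← hwx x, hx])
  constructor
  · intro hsub
    -- define functional fw
    set fw : (Fin n → ℝ) →ₗ[ℝ] ℝ :=
      { toFun := fun x => w ⬝ᵥ x
        map_add' := fun a b => dotProduct_add w a b
        map_smul' := fun c a => by simp [dotProduct_smul] } with hfw
    set V := LinearMap.ker C.mulVecLin with hV
    -- S := ker fw ⊓ V ≤ ker B ⊓ ker C
    have hSle : LinearMap.ker fw ⊓ V ≤ LinearMap.ker B.mulVecLin ⊓ LinearMap.ker C.mulVecLin := by
      rintro x ⟨hx1, hx2⟩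
      have hx1' : w ⬝ᵥ x = 0 := hx1
      have hx2' : C.mulVec x = 0 := hx2
      have hxK : x ∈ K := hsub ⟨by rw [hL]; exact hx1', hx2'⟩
      rw [hK] at hxK
      exact ⟨hzero x hx1' hxK.1, hx2'⟩
    -- rank-nullity bound: finrank (ker fw ⊓ V) ≥ finrank V - 1
    set g : V →ₗ[ℝ] ℝ := fw.comp V.subtype with hg
    have hrn := g.finrank_range_add_finrank_ker
    have hr1 : Module.finrank ℝ (LinearMap.range g) ≤ 1 := by
      have := Submodule.finrank_le (LinearMap.range g)
      simpa using this
    have hker_eq : Submodule.map V.subtype (LinearMap.ker g) = LinearMap.ker fw ⊓ V := by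
      rw [hg, LinearMap.ker_comp, Submodule.map_comap_subtype, inf_comm]
    have hfr : Module.finrank ℝ (LinearMap.ker g) =
        Module.finrank ℝ ↥(LinearMap.ker fw ⊓ V) := by
      rw [← hker_eq, Submodule.finrank_map_subtype_eq]
    have hge : Module.finrank ℝ ↥V - 1 ≤ Module.finrank ℝ ↥(LinearMap.ker fw ⊓ V) := by
      omega
    have hle' : Module.finrank ℝ ↥(LinearMap.ker fw ⊓ V) ≤
        Module.finrank ℝ ↥(LinearMap.ker B.mulVecLin ⊓ V) :=
      Submodule.finrank_mono hSle
    omega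
  · rintro z ⟨⟨hz1, hz2⟩, hzK⟩
    rw [hL] at hz1
    have hz2' : C.mulVec z = 0 := hz2
    refine ⟨?_, hzK, ?_⟩
    · rintro rfl
      apply hzK
      rw [hK]
      constructor <;> simp [Matrix.mulVec_zero]
    · intro hnz
      rw [hK] at hnz
      apply hzK
      rw [hK]
      have hz1' : w ⬝ᵥ z = 0 := hz1
      have hWnz : w ⬝ᵥ (-z) = 0 := by simp [hz1']
      have := hzero (-z) hWnz hnz.1
      have hBz : B.mulVec z = 0 := by
        have h2 : -(B.mulVec z) = 0 := by rw [← Matrix.mulVec_neg]; exact this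
        exact neg_eq_zero.mp h2
      exact ⟨le_of_eq hBz, hz2'⟩
end

section
/- Let B ∈ ℝ^{p×n} (p ≥ 1) and C ∈ ℝ^{q×n}, let K = {x ∈ ℝ^n : Bx ≤ 0, Cx = 0}, let x ∈ K, and let z ∈ ℝ^n satisfy Cz = 0 and z ∉ K. Then there exist λ* ≥ 0 and an index i* ∈ {1,…,p} such that x + λ*z ∈ K and ⟨B_{i*}, x + λ*z⟩ = 0 and ⟨B_{i*}, z⟩ > 0, where B_i denotes the i-th row of B. That is, the point x + λ*z lies in K_{i*} = {y ∈ ℝ^n : By ≤ 0, ⟨B_{i*}, y⟩ = 0, Cy = 0}. -/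
open Matrix

/-- Let `K = {x : Bx ≤ 0, Cx = 0}` with `p ≥ 1`, let `x ∈ K`, and let `z` satisfy
`Cz = 0` and `z ∉ K`. Then there exist `λ* ≥ 0` and an index `i*` such that
`x + λ*z ∈ K`, `⟨B_{i*}, x + λ*z⟩ = 0` and `⟨B_{i*}, z⟩ > 0`; in particular
`x + λ*z` lies in `K_{i*} = {y : By ≤ 0, ⟨B_{i*}, y⟩ = 0, Cy = 0}`. -/
theorem exists_shift_to_facet {p q n : ℕ} (hp : 1 ≤ p)
    (B : Matrix (Fin p) (Fin n) ℝ) (C : Matrix (Fin q) (Fin n) ℝ)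
    (K : Set (Fin n → ℝ))
    (hK : K = {x : Fin n → ℝ | B.mulVec x ≤ 0 ∧ C.mulVec x = 0})
    (x : Fin n → ℝ) (hx : x ∈ K)
    (z : Fin n → ℝ) (hz : C.mulVec z = 0) (hzK : z ∉ K) :
    ∃ (l : ℝ) (i : Fin p), 0 ≤ l ∧ x + l • z ∈ K ∧
      B i ⬝ᵥ (x + l • z) = 0 ∧ 0 < B i ⬝ᵥ z := by
  subst hK
  obtain ⟨hBx, hCx⟩ := hx
  -- There is some i with B i ⬝ᵥ z > 0
  have hS : ∃ i, 0 < B i ⬝ᵥ z := by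
    by_contra h
    push_neg at h
    exact hzK ⟨fun i => h i, hz⟩
  set S : Finset (Fin p) := Finset.univ.filter (fun i => 0 < B i ⬝ᵥ z) with hSdef
  have hSne : S.Nonempty := by
    obtain ⟨i, hi⟩ := hS
    exact ⟨i, by simp [hSdef, hi]⟩
  set f : Fin p → ℝ := fun i => -(B i ⬝ᵥ x) / (B i ⬝ᵥ z) with hf
  obtain ⟨i, hiS, hmin⟩ := S.exists_min_image f hSne
  have hiz : 0 < B i ⬝ᵥ z := by simpa [hSdef] using hiS
  have hix : B i ⬝ᵥ x ≤ 0 := hBx i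
  refine ⟨f i, i, ?_, ⟨?_, ?_⟩, ?_, hiz⟩
  · exact div_nonneg (by linarith) hiz.le
  · intro j
    have hj : B j ⬝ᵥ (x + f i • z) = B j ⬝ᵥ x + f i * (B j ⬝ᵥ z) := by
      simp [dotProduct_add, dotProduct_smul, smul_eq_mul]
    rw [Matrix.mulVec, hj]
    by_cases hjz : 0 < B j ⬝ᵥ z
    · have hjS : j ∈ S := by simp [hSdef, hjz]
      have := hmin j hjS
      have hle : f i * (B j ⬝ᵥ z) ≤ f j * (B j ⬝ᵥ z) :=
        mul_le_mul_of_nonneg_right this hjz.le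
      have : f j * (B j ⬝ᵥ z) = -(B j ⬝ᵥ x) := by
        rw [hf]; dsimp only; rw [div_mul_cancel₀ _ hjz.ne']
      simp only [Pi.zero_apply]
      linarith
    · push_neg at hjz
      have hfi : 0 ≤ f i := div_nonneg (by linarith) hiz.le
      have : f i * (B j ⬝ᵥ z) ≤ 0 := mul_nonpos_of_nonneg_of_nonpos hfi hjz
      have := hBx j
      simp only [Pi.zero_apply]
      have hjx : B j ⬝ᵥ x ≤ 0 := hBx j
      linarith
  · rw [Matrix.mulVec_add, Matrix.mulVec_smul, hCx, hz]
    simp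
  · have : B i ⬝ᵥ (x + f i • z) = B i ⬝ᵥ x + f i * (B i ⬝ᵥ z) := by
      simp [dotProduct_add, dotProduct_smul, smul_eq_mul]
    rw [this]
    rw [hf]; dsimp only; rw [div_mul_cancel₀ _ hiz.ne']; ring
end

section
/- Let B ∈ ℝ^{p×n} (p ≥ 1) and C ∈ ℝ^{q×n}, let K = {x ∈ ℝ^n : Bx ≤ 0, Cx = 0}, and for each i ∈ {1,…,p} let K_i = {x ∈ ℝ^n : Bx ≤ 0, ⟨B_i, x⟩ = 0, Cx = 0}, where B_i is the i-th row of B. If there exists z ∈ ℝ^n with Cz = 0 such that z ∉ K and −z ∉ K, then every x ∈ K is a convex combination of two points of ⋃_{1 ≤ i ≤ p} K_i; in particular K is contained in the convex hull of ⋃_{1 ≤ i ≤ p} K_i. -/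
open Matrix

/-- Let `K = {x : Bx ≤ 0, Cx = 0}` with `p ≥ 1`, and for each `i` let
`K_i = {x : Bx ≤ 0, ⟨B_i, x⟩ = 0, Cx = 0}`. If there is some `z` with `Cz = 0`,
`z ∉ K` and `−z ∉ K`, then every `x ∈ K` is a convex combination of two points of
`⋃ i, K_i`; in particular `K ⊆ convexHull (⋃ i, K_i)`. -/
theorem cone_subset_convexHull_facets {p q n : ℕ} (hp : 1 ≤ p)
    (B : Matrix (Fin p) (Fin n) ℝ) (C : Matrix (Fin q) (Fin n) ℝ)
    (K : Set (Fin n → ℝ))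
    (hK : K = {x : Fin n → ℝ | B.mulVec x ≤ 0 ∧ C.mulVec x = 0})
    (Ki : Fin p → Set (Fin n → ℝ))
    (hKi : ∀ i, Ki i = {x : Fin n → ℝ | B.mulVec x ≤ 0 ∧ B i ⬝ᵥ x = 0 ∧ C.mulVec x = 0})
    (hz : ∃ z : Fin n → ℝ, C.mulVec z = 0 ∧ z ∉ K ∧ -z ∉ K) :
    (∀ x ∈ K, ∃ u ∈ ⋃ i, Ki i, ∃ v ∈ ⋃ i, Ki i, ∃ μ : ℝ,
        0 ≤ μ ∧ μ ≤ 1 ∧ x = μ • u + (1 - μ) • v) ∧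
      K ⊆ convexHull ℝ (⋃ i, Ki i) := by
  obtain ⟨z, hCz, hzK, hznK⟩ := hz
  subst hK
  have hbz_pos : ∃ i, 0 < B.mulVec z i := by
    by_contra h
    push_neg at h
    exact hzK ⟨fun i => h i, hCz⟩
  have hbz_neg : ∃ i, B.mulVec z i < 0 := by
    by_contra h
    push_neg at h
    apply hznK
    constructor
    · intro i
      simp only [Matrix.mulVec_neg, Pi.neg_apply, Pi.zero_apply]
      exact neg_nonpos.mpr (h i)
    · simp [Matrix.mulVec_neg, hCz]
  have main : ∀ x ∈ {x : Fin n → ℝ | B.mulVec x ≤ 0 ∧ C.mulVec x = 0},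
      ∃ u ∈ ⋃ i, Ki i, ∃ v ∈ ⋃ i, Ki i, ∃ μ : ℝ,
        0 ≤ μ ∧ μ ≤ 1 ∧ x = μ • u + (1 - μ) • v := by
    rintro x ⟨hx1, hx2⟩
    by_cases hex : ∃ i, B.mulVec x i = 0
    · obtain ⟨i, hi⟩ := hex
      have hxKi : x ∈ Ki i := by
        rw [hKi]
        exact ⟨hx1, hi, hx2⟩
      exact ⟨x, Set.mem_iUnion.mpr ⟨i, hxKi⟩, x, Set.mem_iUnion.mpr ⟨i, hxKi⟩, 0,
        le_refl 0, by norm_num, by simp⟩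
    · push_neg at hex
      have hxlt : ∀ i, B.mulVec x i < 0 := fun i => lt_of_le_of_ne (hx1 i) (hex i)
      set bx := B.mulVec x with hbx
      set bz := B.mulVec z with hbz0
      obtain ⟨i0, hi0⟩ := hbz_pos
      obtain ⟨j0, hj0⟩ := hbz_neg
      have hSp : (Finset.univ.filter (fun i => 0 < bz i)).Nonempty := ⟨i0, by simp [hi0]⟩
      obtain ⟨i1, hi1mem, hi1min⟩ :=
        Finset.exists_min_image _ (fun i => -bx i / bz i) hSp
      have hbzi1 : 0 < bz i1 := by simpa using hi1mem
      set t := -bx i1 / bz i1 with ht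
      have htpos : 0 < t := div_pos (by linarith [hxlt i1]) hbzi1
      have hSn : (Finset.univ.filter (fun i => bz i < 0)).Nonempty := ⟨j0, by simp [hj0]⟩
      obtain ⟨j1, hj1mem, hj1min⟩ :=
        Finset.exists_min_image _ (fun j => bx j / bz j) hSn
      have hbzj1 : bz j1 < 0 := by simpa using hj1mem
      set s := bx j1 / bz j1 with hs
      have hspos : 0 < s := div_pos_of_neg_of_neg (hxlt j1) hbzj1
      set u := x + t • z with hu
      set v := x - s • z with hv
      have hBu : ∀ i, B.mulVec u i = bx i + t * bz i := by
        intro i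
        simp [hu, Matrix.mulVec_add, Matrix.mulVec_smul, hbx, hbz0]
      have hBv : ∀ i, B.mulVec v i = bx i - s * bz i := by
        intro i
        simp [hv, Matrix.mulVec_sub, Matrix.mulVec_smul, hbx, hbz0]
      have huK : u ∈ Ki i1 := by
        rw [hKi]
        refine ⟨fun i => ?_, ?_, ?_⟩
        · rw [Pi.zero_apply, hBu i]
          by_cases hb : 0 < bz i
          · have h1 : t ≤ -bx i / bz i := hi1min i (by simp [hb])
            have h2 : t * bz i ≤ -bx i := by
              rw [le_div_iff₀ hb] at h1
              linarith
            linarith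
          · push_neg at hb
            nlinarith [hxlt i]
        · show B.mulVec u i1 = 0
          rw [hBu i1, ht]
          have hne : bz i1 ≠ 0 := ne_of_gt hbzi1
          field_simp
          ring
        · simp [hu, Matrix.mulVec_add, Matrix.mulVec_smul, hx2, hCz]
      have hvK : v ∈ Ki j1 := by
        rw [hKi]
        refine ⟨fun j => ?_, ?_, ?_⟩
        · rw [Pi.zero_apply, hBv j]
          by_cases hb : bz j < 0
          · have h1 : s ≤ bx j / bz j := hj1min j (by simp [hb])
            rw [le_div_iff_of_neg hb] at h1
            linarith
          · push_neg at hb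
            nlinarith [hxlt j]
        · show B.mulVec v j1 = 0
          rw [hBv j1, hs]
          have hne : bz j1 ≠ 0 := ne_of_lt hbzj1
          field_simp
          ring
        · simp [hv, Matrix.mulVec_sub, Matrix.mulVec_smul, hx2, hCz]
      have hts : 0 < t + s := by linarith
      refine ⟨u, Set.mem_iUnion.mpr ⟨i1, huK⟩, v, Set.mem_iUnion.mpr ⟨j1, hvK⟩,
        s / (t + s), le_of_lt (div_pos hspos hts), ?_, ?_⟩
      · rw [div_le_one hts]; linarith
      · funext k
        simp only [hu, hv, Pi.add_apply, Pi.sub_apply, Pi.smul_apply, smul_eq_mul]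
        field_simp
        ring
  refine ⟨main, fun x hx => ?_⟩
  obtain ⟨u, hu, v, hv, μ, h0, h1, hxe⟩ := main x hx
  rw [hxe]
  exact (convex_convexHull ℝ _) (subset_convexHull ℝ _ hu) (subset_convexHull ℝ _ hv)
    h0 (by linarith) (by linarith)
end

section
/- For every rational matrix A ∈ ℚ^{m×n}, there exists a finite set X ⊆ ℚ^n of rational vectors such that {x ∈ ℝ^n : Ax ≤ 0} = ccone(X) (viewing the vectors of X inside ℝ^n). -/
open Finset

private def castv {n : ℕ} (v : Fin n → ℚ) : Fin n → ℝ := fun j => ((v j : ℝ))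

private def dotR {n : ℕ} (b : Fin n → ℚ) (x : Fin n → ℝ) : ℝ := ∑ j, (b j : ℝ) * x j

private def dQ {n : ℕ} (b v : Fin n → ℚ) : ℚ := ∑ j, b j * v j

private def coneOf {n : ℕ} (X : Finset (Fin n → ℚ)) : Set (Fin n → ℝ) :=
  {y | ∃ lam : (Fin n → ℚ) → ℝ, (∀ v ∈ X, 0 ≤ lam v) ∧
    y = ∑ v ∈ X, lam v • (fun j => ((v j : ℝ)))}

private lemma castv_eq {n : ℕ} (v : Fin n → ℚ) : (fun j => ((v j : ℝ))) = castv v := rfl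

private lemma mem_coneOf_sum {n : ℕ} {ι : Type} (s : Finset ι) (f : ι → Fin n → ℚ)
    (c : ι → ℝ) (hc : ∀ i ∈ s, 0 ≤ c i) (X : Finset (Fin n → ℚ))
    (hf : ∀ i ∈ s, f i ∈ X) :
    (∑ i ∈ s, c i • castv (f i)) ∈ coneOf X := by
  classical
  refine ⟨fun v => ∑ i ∈ s.filter (f · = v), c i, ?_, ?_⟩
  · intro v _
    exact Finset.sum_nonneg fun i hi => hc i (Finset.mem_filter.mp hi).1
  · rw [← Finset.sum_fiberwise_of_maps_to hf (fun i => c i • castv (f i))]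
    refine Finset.sum_congr rfl fun v hv => ?_
    rw [castv_eq, Finset.sum_smul]
    refine (Finset.sum_congr rfl fun i hi => ?_).symm
    rw [(Finset.mem_filter.mp hi).2]

private lemma castv_mem_coneOf {n : ℕ} {X : Finset (Fin n → ℚ)} {v : Fin n → ℚ}
    (hv : v ∈ X) : castv v ∈ coneOf X := by
  have h := mem_coneOf_sum ({v} : Finset (Fin n → ℚ)) id (fun _ => (1:ℝ))
    (fun _ _ => zero_le_one) X (by simpa using hv)
  simpa using h

private lemma dotR_castv {n : ℕ} (b v : Fin n → ℚ) : dotR b (castv v) = (dQ b v : ℝ) := by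
  unfold dotR castv dQ
  push_cast
  rfl

private lemma dotR_sum {n : ℕ} (b : Fin n → ℚ) (X : Finset (Fin n → ℚ))
    (lam : (Fin n → ℚ) → ℝ) :
    dotR b (∑ v ∈ X, lam v • castv v) = ∑ v ∈ X, lam v * (dQ b v : ℝ) := by
  unfold dotR
  simp only [Finset.sum_apply, Pi.smul_apply, smul_eq_mul, Finset.mul_sum]
  rw [Finset.sum_comm]
  refine Finset.sum_congr rfl fun v _ => ?_
  rw [← dotR_castv, dotR, Finset.mul_sum]
  exact Finset.sum_congr rfl fun j _ => by unfold castv; ring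

private lemma dQ_comb {n : ℕ} (b a v w : Fin n → ℚ) :
    dQ b (dQ a w • v - dQ a v • w) = dQ a w * dQ b v - dQ a v * dQ b w := by
  unfold dQ
  simp only [Pi.sub_apply, Pi.smul_apply, smul_eq_mul, mul_sub, Finset.sum_sub_distrib,
    Finset.mul_sum]
  congr 1 <;> exact Finset.sum_congr rfl fun j _ => by ring

private lemma dotR_add {n : ℕ} (b : Fin n → ℚ) (x y : Fin n → ℝ) :
    dotR b (x + y) = dotR b x + dotR b y := by
  unfold dotR
  rw [← Finset.sum_add_distrib]
  exact Finset.sum_congr rfl fun j _ => by simp [mul_add]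

private lemma base_step {n : ℕ} (x : Fin n → ℝ) : x = ∑ p : Fin n × Bool,
        (if p.2 then max (x p.1) 0 else max (-(x p.1)) 0) •
          castv (Pi.single p.1 (if p.2 then (1:ℚ) else -1)) := by
  funext j
  rw [Fintype.sum_prod_type]
  simp only [Finset.sum_apply, Pi.smul_apply, smul_eq_mul]
  have h1 : ∀ i : Fin n, (∑ b : Bool, (if b = true then x i ⊔ 0 else -x i ⊔ 0) *
      castv (Pi.single i (if b = true then (1:ℚ) else -1)) j) = if j = i then x j else 0 := by
    intro i
    rw [Fintype.sum_bool]
    simp only [if_true, Bool.false_eq_true, if_false]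
    unfold castv
    rw [Pi.single_apply, Pi.single_apply]
    split_ifs with h
    · subst h
      push_cast
      have := max_zero_sub_eq_self (x j)
      ring_nf
      ring_nf at this
      linarith
    · push_cast
      ring
  rw [Finset.sum_congr rfl fun i _ => h1 i, Finset.sum_ite_eq]
  simp

private lemma cons_step {n : ℕ} (a : Fin n → ℚ) (L : List (Fin n → ℚ))
    (X : Finset (Fin n → ℚ))
    (hX : {x : Fin n → ℝ | ∀ b ∈ L, dotR b x ≤ 0} = coneOf X) :
    ∃ X' : Finset (Fin n → ℚ),
      {x : Fin n → ℝ | ∀ b ∈ a :: L, dotR b x ≤ 0} = coneOf X' := by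
  classical
  set N := X.filter (fun v => dQ a v ≤ 0) with hN
  set P := X.filter (fun v => ¬ dQ a v ≤ 0) with hP
  set z : (Fin n → ℚ) × (Fin n → ℚ) → (Fin n → ℚ) :=
    fun p => dQ a p.2 • p.1 - dQ a p.1 • p.2 with hzdef
  refine ⟨N ∪ (N ×ˢ P).image z, ?_⟩
  have hXNP : N ∪ P = X := Finset.filter_union_filter_not_eq _ X
  have hdisj : Disjoint N P := Finset.disjoint_filter_filter_not X X _
  have hNle : ∀ v ∈ N, dQ a v ≤ 0 := fun v hv => (Finset.mem_filter.mp hv).2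
  have hPpos : ∀ w ∈ P, 0 < dQ a w := fun w hw => not_le.mp (Finset.mem_filter.mp hw).2
  have hNX : ∀ v ∈ N, v ∈ X := fun v hv => (Finset.mem_filter.mp hv).1
  have hPX : ∀ w ∈ P, w ∈ X := fun w hw => (Finset.mem_filter.mp hw).1
  have hgen : ∀ v ∈ X, ∀ b ∈ L, dQ b v ≤ 0 := by
    intro v hv b hb
    have h1 : castv v ∈ coneOf X := castv_mem_coneOf hv
    rw [← hX] at h1
    have h2 := h1 b hb
    rw [dotR_castv] at h2
    exact_mod_cast h2
  -- every generator of X' satisfies all constraints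
  have hgen' : ∀ u ∈ N ∪ (N ×ˢ P).image z, dQ a u ≤ 0 ∧ ∀ b ∈ L, dQ b u ≤ 0 := by
    intro u hu
    rcases Finset.mem_union.mp hu with hu | hu
    · exact ⟨hNle u hu, hgen u (hNX u hu)⟩
    · obtain ⟨p, hp, rfl⟩ := Finset.mem_image.mp hu
      obtain ⟨hp1, hp2⟩ := Finset.mem_product.mp hp
      have h1 := hNle _ hp1
      have h2 := hPpos _ hp2
      constructor
      · rw [hzdef]; rw [dQ_comb]; nlinarith
      · intro b hb
        rw [hzdef, dQ_comb]
        have h3 := hgen _ (hNX _ hp1) b hb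
        have h4 := hgen _ (hPX _ hp2) b hb
        nlinarith
  ext x
  simp only [Set.mem_setOf_eq, List.mem_cons, forall_eq_or_imp]
  constructor
  · rintro ⟨ha, hL⟩
    have hx : x ∈ coneOf X := by rw [← hX]; exact hL
    obtain ⟨lam, hlam, hsum⟩ := hx
    simp only [castv_eq] at hsum
    rw [← hXNP, Finset.sum_union hdisj] at hsum
    set Sp := ∑ w ∈ P, lam w * (dQ a w : ℝ) with hSpdef
    set Sn := ∑ v ∈ N, lam v * (dQ a v : ℝ) with hSndef
    have haeq : dotR a x = Sn + Sp := by
      rw [hsum, dotR_add, dotR_sum, dotR_sum]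
    have hSp0 : 0 ≤ Sp := Finset.sum_nonneg fun w hw =>
      mul_nonneg (hlam w (hPX w hw)) (by exact_mod_cast (hPpos w hw).le)
    have ha' : Sn + Sp ≤ 0 := haeq ▸ ha
    rcases eq_or_lt_of_le hSp0 with h0 | hpos
    · -- Sp = 0 : all lam on P vanish
      have hnn : ∀ w ∈ P, 0 ≤ lam w * (dQ a w : ℝ) := fun w hw =>
        mul_nonneg (hlam w (hPX w hw)) (by exact_mod_cast (hPpos w hw).le)
      have hall : ∀ w ∈ P, lam w * (dQ a w : ℝ) = 0 :=
        (Finset.sum_eq_zero_iff_of_nonneg hnn).mp (hSpdef ▸ h0.symm)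
      have hlam0 : ∀ w ∈ P, lam w = 0 := by
        intro w hw
        have h1 := hall w hw
        have h2 : ((dQ a w : ℝ)) ≠ 0 := by exact_mod_cast (hPpos w hw).ne'
        exact (mul_eq_zero.mp h1).resolve_right h2
      have hx2 : x = ∑ v ∈ N, lam v • castv (id v) := by
        rw [hsum, show (∑ w ∈ P, lam w • castv w) = 0 from
          Finset.sum_eq_zero (fun w hw => by rw [hlam0 w hw, zero_smul]), add_zero]
        rfl
      rw [hx2]
      exact mem_coneOf_sum N id lam (fun v hv => hlam v (hNX v hv)) _
        (fun v hv => Finset.mem_union_left _ hv)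
    · -- Sp > 0
      set D := -Sn with hDdef
      have hD : 0 < D := by simp only [hDdef]; linarith
      have hSpD : Sp ≤ D := by simp only [hDdef]; linarith
      set c : (Fin n → ℚ) ⊕ ((Fin n → ℚ) × (Fin n → ℚ)) → ℝ :=
        Sum.elim (fun v => lam v * (1 - Sp / D)) (fun p => lam p.1 * lam p.2 / D) with hcdef
      have hc1 : 0 ≤ 1 - Sp / D := by
        have : Sp / D ≤ 1 := (div_le_one hD).mpr hSpD
        linarith
      have hx2 : x = ∑ i ∈ N.disjSum (N ×ˢ P), c i • castv (Sum.elim id z i) := by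
        rw [Finset.sum_disjSum]
        simp only [hcdef, Sum.elim_inl, Sum.elim_inr, id]
        funext j
        simp only [hsum, Pi.add_apply, Finset.sum_apply, Pi.smul_apply, smul_eq_mul]
        have hcz : ∀ p ∈ N ×ˢ P, castv (z p) j
            = (dQ a p.2 : ℝ) * ((p.1 j : ℝ)) - (dQ a p.1 : ℝ) * ((p.2 j : ℝ)) := by
          intro p _
          simp only [hzdef, castv, Pi.sub_apply, Pi.smul_apply, smul_eq_mul]
          push_cast
          ring
        have hpair : ∑ p ∈ N ×ˢ P, (lam p.1 * lam p.2 / D) * castv (z p) j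
            = (Sp / D) * (∑ v ∈ N, lam v * castv v j) + ∑ w ∈ P, lam w * castv w j := by
          rw [Finset.sum_congr rfl (fun p hp => by rw [hcz p hp])]
          rw [Finset.sum_product]
          have hinner : ∀ v ∈ N, ∑ w ∈ P,
              (lam v * lam w / D) * ((dQ a w : ℝ) * ((v j : ℝ)) - (dQ a v : ℝ) * ((w j : ℝ)))
              = (lam v * ((v j : ℝ))) * (Sp / D)
                - (lam v * (dQ a v : ℝ)) * ((∑ w ∈ P, lam w * castv w j) / D) := by
            intro v _
            rw [hSpdef, Finset.sum_div, Finset.sum_div, Finset.mul_sum, Finset.mul_sum,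
              ← Finset.sum_sub_distrib]
            refine Finset.sum_congr rfl fun w _ => ?_
            simp only [castv]
            ring
          rw [Finset.sum_congr rfl hinner, Finset.sum_sub_distrib, ← Finset.sum_mul,
            ← Finset.sum_mul]
          have hSneq : ∑ v ∈ N, lam v * (dQ a v : ℝ) = -D := by
            rw [hDdef, hSndef, neg_neg]
          rw [hSneq]
          have : ∑ v ∈ N, lam v * ((v j : ℝ)) = ∑ v ∈ N, lam v * castv v j := by
            refine Finset.sum_congr rfl fun v _ => ?_
            simp [castv]
          rw [this]
          field_simp
          ring
        rw [hpair]
        have hNpart : ∑ v ∈ N, lam v * (1 - Sp / D) * castv v j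
            = (1 - Sp / D) * ∑ v ∈ N, lam v * castv v j := by
          rw [Finset.mul_sum]
          exact Finset.sum_congr rfl fun v _ => by ring
        rw [hNpart]
        ring
      rw [hx2]
      refine mem_coneOf_sum _ _ _ ?_ _ ?_
      · rintro (v | p) hi
        · simp only [hcdef, Sum.elim_inl]
          exact mul_nonneg (hlam v (hNX v (Finset.inl_mem_disjSum.mp hi))) hc1
        · simp only [hcdef, Sum.elim_inr]
          obtain ⟨h1, h2⟩ := Finset.mem_product.mp (Finset.inr_mem_disjSum.mp hi)
          exact div_nonneg (mul_nonneg (hlam _ (hNX _ h1)) (hlam _ (hPX _ h2))) hD.le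
      · rintro (v | p) hi
        · exact Finset.mem_union_left _ (Finset.inl_mem_disjSum.mp hi)
        · exact Finset.mem_union_right _
            (Finset.mem_image_of_mem z (Finset.inr_mem_disjSum.mp hi))
  · rintro ⟨lam, hlam, hsum⟩
    simp only [castv_eq] at hsum
    constructor
    · rw [hsum, dotR_sum]
      exact Finset.sum_nonpos fun u hu => mul_nonpos_of_nonneg_of_nonpos (hlam u hu)
        (by exact_mod_cast (hgen' u hu).1)
    · intro b hb
      rw [hsum, dotR_sum]
      exact Finset.sum_nonpos fun u hu => mul_nonpos_of_nonneg_of_nonpos (hlam u hu)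
        (by exact_mod_cast (hgen' u hu).2 b hb)

private lemma main_cone {n : ℕ} (L : List (Fin n → ℚ)) :
    ∃ X : Finset (Fin n → ℚ),
      {x : Fin n → ℝ | ∀ b ∈ L, dotR b x ≤ 0} = coneOf X := by
  induction L with
  | nil =>
    refine ⟨(Finset.univ : Finset (Fin n × Bool)).image
      (fun p => Pi.single p.1 (if p.2 then (1:ℚ) else -1)), ?_⟩
    ext x
    simp only [List.not_mem_nil, false_implies, implies_true, Set.mem_setOf_eq, true_iff]
    rw [show x = _ from base_step x]
    exact mem_coneOf_sum Finset.univ _ _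
      (fun p _ => by split <;> positivity) _
      (fun p _ => Finset.mem_image_of_mem _ (Finset.mem_univ p))
  | cons a L ih =>
    obtain ⟨X, hX⟩ := ih
    exact cons_step a L X hX

/-- For every rational matrix `A ∈ ℚ^{m×n}`, there is a finite set `X` of rational vectors
such that the real polyhedral cone `{x ∈ ℝ^n : Ax ≤ 0}` is the conic hull of `X`
(viewing the vectors of `X` inside `ℝ^n`). -/
theorem rational_polyhedral_cone_finitely_generated_rational {m n : ℕ}
    (A : Matrix (Fin m) (Fin n) ℚ) :
    ∃ X : Finset (Fin n → ℚ),
      {x : Fin n → ℝ | (A.map (Rat.cast : ℚ → ℝ)).mulVec x ≤ 0} =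
        {y : Fin n → ℝ | ∃ lam : (Fin n → ℚ) → ℝ, (∀ v ∈ X, 0 ≤ lam v) ∧
          y = ∑ v ∈ X, lam v • (fun j => ((v j : ℝ)))} := by
  obtain ⟨X, hX⟩ := main_cone (n := n) (List.ofFn (fun i => A i))
  refine ⟨X, ?_⟩
  have hset : {x : Fin n → ℝ | (A.map (Rat.cast : ℚ → ℝ)).mulVec x ≤ 0}
      = {x : Fin n → ℝ | ∀ b ∈ List.ofFn (fun i => A i), dotR b x ≤ 0} := by
    ext x
    simp only [Set.mem_setOf_eq, Pi.le_def, Pi.zero_apply, List.mem_ofFn]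
    constructor
    · rintro h b ⟨i, rfl⟩
      simpa [Matrix.mulVec, dotProduct, Matrix.map_apply, dotR] using h i
    · intro h i
      simpa [Matrix.mulVec, dotProduct, Matrix.map_apply, dotR] using h (A i) ⟨i, rfl⟩
  rw [hset, hX]
  rfl
end
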